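/- There exists a (necessarily unique) k-algebra homomorphism s : L → H with s(ζ̄) = g^{p−1}y, where ζ̄ is the image of ζ in L; equivalently, (g^{p−1}y)^p = 0 holds in H. Moreover, π ∘ s = id_L, where π : H → L is the algebra homomorphism determined by π(x) = 0, π(g) = 1, π(y) = ζ̄. -/

import Mathlib

noncomputable section

namespace JordanBos

variable (k : Type*) [Field k]

/-- Generators: `x = ι 0`, `y = ι 1`, `g = ι 2`. -/
def X : FreeAlgebra k (Fin 3) := FreeAlgebra.ι k (0 : Fin 3)
def Y : FreeAlgebra k (Fin 3) := FreeAlgebra.ι k (1 : Fin 3)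
def G : FreeAlgebra k (Fin 3) := FreeAlgebra.ι k (2 : Fin 3)

/-- The defining relations of `H = B(V(1,2)) # kΓ`: the elements
`x^p`, `y^p`, `g^p − 1`, `gx − xg`, `gy − yg − xg`, `yx − xy + (1/2)x²`
are set to `0`; `RingQuot` of this relation is the quotient by the two-sided
ideal they generate. -/
def rel (p : ℕ) : FreeAlgebra k (Fin 3) → FreeAlgebra k (Fin 3) → Prop :=
  fun a b =>
    (a = (X k) ^ p ∨ a = (Y k) ^ p ∨ a = (G k) ^ p - 1 ∨
      a = G k * X k - X k * G k ∨
      a = G k * Y k - Y k * G k - X k * G k ∨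
      a = Y k * X k - X k * Y k + (2⁻¹ : k) • (X k) ^ 2) ∧ b = 0

/-- The Hopf algebra `H`. -/
def H (p : ℕ) := RingQuot (rel k p)

instance (p : ℕ) : Ring (H k p) := inferInstanceAs (Ring (RingQuot (rel k p)))

instance (p : ℕ) : Algebra k (H k p) :=
  inferInstanceAs (Algebra k (RingQuot (rel k p)))

def xH (p : ℕ) : H k p := RingQuot.mkAlgHom k (rel k p) (X k)
def yH (p : ℕ) : H k p := RingQuot.mkAlgHom k (rel k p) (Y k)
def gH (p : ℕ) : H k p := RingQuot.mkAlgHom k (rel k p) (G k)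

end JordanBos

open JordanBos

/-- `L = k[ζ]/(ζ^p)`. -/
def Ldiv (k : Type*) [Field k] (p : ℕ) :=
  Polynomial k ⧸ Ideal.span ({Polynomial.X ^ p} : Set (Polynomial k))

instance (k : Type*) [Field k] (p : ℕ) : CommRing (Ldiv k p) :=
  inferInstanceAs (CommRing (Polynomial k ⧸
    Ideal.span ({Polynomial.X ^ p} : Set (Polynomial k))))

instance (k : Type*) [Field k] (p : ℕ) : Algebra k (Ldiv k p) :=
  inferInstanceAs (Algebra k (Polynomial k ⧸
    Ideal.span ({Polynomial.X ^ p} : Set (Polynomial k))))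

/-- The image `ζ̄` of `ζ` in `L`. -/
def zeta (k : Type*) [Field k] (p : ℕ) : Ldiv k p :=
  Ideal.Quotient.mk (Ideal.span ({Polynomial.X ^ p} : Set (Polynomial k)))
    Polynomial.X

/-!
Write `u = g^(p-1)`. The relations give `y g = g (y - x)`, hence `y u = u (y + x)` in
characteristic `p`, so `(u y)^n = u^n (y + (n-1)x) ⋯ (y + x) y`. With `t = x/2` the Jordan
relation becomes `y t = t y - t²`, and the ordered product `(y + 2(n-1)t) ⋯ (y + 2t) y` has the
normal form `∑_{b+m=n} C(n,b) (n-1)(n-2)⋯(n-b) t^b y^m`. For `n = p` every coefficient with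
`b > 0` is divisible by `p`, leaving `y^p = 0`. The section is then `ζ̄ ↦ u y`, and `π ∘ s` fixes
`ζ̄` because `π(u y) = ζ̄`.
-/

open Finset

def descendingProd {R : Type*} [Monoid R] (f : ℕ → R) : ℕ → R
  | 0 => 1
  | n + 1 => f n * descendingProd f n

section Conjugation

variable {R : Type*} [Ring R] {g c y : R}

theorem mul_pow_eq_pow_mul_add_nsmul (hc : Commute g c) (h : y * g = g * (y + c)) (m : ℕ) :
    y * g ^ m = g ^ m * (y + m • c) := by
  induction m with
  | zero => simp
  | succ m ih =>
    rw [pow_succ, ← mul_assoc, ih, mul_assoc, add_mul, h, smul_mul_assoc, ← hc.eq, mul_assoc,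
      ← mul_smul_comm, ← mul_add, add_assoc, ← succ_nsmul']

theorem mul_pow_eq_pow_mul_descendingProd (hc : Commute g c) (h : y * g = g * (y + c)) (n : ℕ) :
    (g * y) ^ n = g ^ n * descendingProd (fun i => y + i • c) n := by
  induction n with
  | zero => simp [descendingProd]
  | succ n ih =>
    rw [pow_succ', ih, mul_assoc, ← mul_assoc y, mul_pow_eq_pow_mul_add_nsmul hc h, pow_succ',
      descendingProd]
    simp only [mul_assoc]

end Conjugation

def jordanCoeff (n b : ℕ) : ℕ := n.choose b * (n - 1).descFactorial b

@[simp] theorem jordanCoeff_zero_right (n : ℕ) : jordanCoeff n 0 = 1 := by simp [jordanCoeff]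

theorem jordanCoeff_of_lt {n b : ℕ} (h : n < b) : jordanCoeff n b = 0 := by
  simp [jordanCoeff, Nat.choose_eq_zero_of_lt h]

theorem jordanCoeff_succ_succ (n b : ℕ) :
    (jordanCoeff (n + 1) (b + 1) : ℤ) = jordanCoeff n (b + 1) + (2 * n - b) * jordanCoeff n b := by
  cases n with
  | zero => rcases b with _ | b <;> simp [jordanCoeff]
  | succ m =>
    rcases le_or_gt b m with hb | hb
    · have key := Nat.choose_succ_right_eq (m + 1) b
      simp only [jordanCoeff, Nat.add_sub_cancel, Nat.choose_succ_succ (m + 1) b,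
        Nat.succ_descFactorial_succ, Nat.descFactorial_succ]
      zify [hb, hb.trans m.le_succ] at key ⊢
      linear_combination (m.descFactorial b : ℤ) * key
    · simp [jordanCoeff, Nat.descFactorial_of_lt hb]
      omega

theorem Nat.Prime.dvd_jordanCoeff {p b : ℕ} (hp : p.Prime) (hb : 0 < b) :
    p ∣ jordanCoeff p b := by
  rcases lt_or_ge b p with h | h
  · exact (hp.dvd_choose_self hb.ne' h).mul_right _
  · simp [jordanCoeff, Nat.descFactorial_of_lt (by omega : p - 1 < b)]

section JordanPlane

variable {R : Type*} [Ring R] {t y : R}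

theorem mul_pow_eq_pow_mul_sub_nsmul (hyt : y * t = t * y - t ^ 2) (b : ℕ) :
    y * t ^ b = t ^ b * y - b • t ^ (b + 1) := by
  induction b with
  | zero => simp
  | succ b ih =>
    rw [pow_succ, ← mul_assoc, ih, sub_mul, mul_assoc, hyt, mul_sub, ← mul_assoc, ← pow_succ,
      smul_mul_assoc, ← pow_succ, sq, ← mul_assoc, ← pow_succ, ← pow_succ, succ_nsmul]
    abel

theorem add_nsmul_two_nsmul_mul (hyt : y * t = t * y - t ^ 2) (n b m : ℕ) :
    (y + n • (2 • t)) * (t ^ b * y ^ m) =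
      t ^ b * y ^ (m + 1) + (2 * n - b : ℤ) • (t ^ (b + 1) * y ^ m) := by
  rw [add_mul, ← mul_assoc, mul_pow_eq_pow_mul_sub_nsmul hyt, sub_mul, mul_assoc, ← pow_succ',
    smul_mul_assoc, smul_mul_assoc, smul_mul_assoc, ← mul_assoc, ← pow_succ', smul_smul]
  module

theorem descendingProd_eq_sum_antidiagonal (hyt : y * t = t * y - t ^ 2) (n : ℕ) :
    descendingProd (fun i => y + i • (2 • t)) n =
      ∑ q ∈ antidiagonal n, (jordanCoeff n q.1 : ℤ) • (t ^ q.1 * y ^ q.2) := by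
  induction n with
  | zero => simp [descendingProd]
  | succ n ih =>
    have hshift : ∑ q ∈ antidiagonal n, (jordanCoeff n q.1 : ℤ) • (t ^ q.1 * y ^ (q.2 + 1)) =
        y ^ (n + 1) + ∑ q ∈ antidiagonal n,
          (jordanCoeff n (q.1 + 1) : ℤ) • (t ^ (q.1 + 1) * y ^ q.2) := by
      -- split off the first and the last term of the same sum over `antidiagonal (n + 1)`;
      -- the last one, `jordanCoeff n (n + 1) • t ^ (n + 1)`, vanishes
      have h := (Nat.sum_antidiagonal_succ' (N := R) (n := n)
        (f := fun q => (jordanCoeff n q.1 : ℤ) • (t ^ q.1 * y ^ q.2))).symm.trans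
        Nat.sum_antidiagonal_succ
      simpa [jordanCoeff_of_lt] using h
    rw [descendingProd, ih, mul_sum]
    simp only [mul_smul_comm, add_nsmul_two_nsmul_mul hyt, smul_add, sum_add_distrib, hshift]
    rw [Nat.sum_antidiagonal_succ]
    simp only [jordanCoeff_succ_succ, jordanCoeff_zero_right, add_smul, sum_add_distrib,
      smul_smul, mul_comm, Nat.cast_one, one_smul, pow_zero, one_mul, add_assoc]

theorem descendingProd_eq_pow_of_prime (hyt : y * t = t * y - t ^ 2) {p : ℕ} (hp : p.Prime)
    (hpR : (p : R) = 0) : descendingProd (fun i => y + i • (2 • t)) p = y ^ p := by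
  rw [descendingProd_eq_sum_antidiagonal hyt,
    sum_eq_single_of_mem (0, p) (HasAntidiagonal.mem_antidiagonal.mpr (zero_add p))]
  · simp
  rintro ⟨b, m⟩ hbm hne
  have hb : 0 < b :=
    Nat.pos_of_ne_zero fun hb => hne (by simp_all [HasAntidiagonal.mem_antidiagonal])
  obtain ⟨d, hd⟩ := hp.dvd_jordanCoeff hb
  rw [hd, Nat.cast_mul, mul_smul, natCast_zsmul, nsmul_eq_mul, hpR, zero_mul]

end JordanPlane

namespace JordanBos

variable (k : Type*) [Field k] (p : ℕ)

theorem mkAlgHom_eq_zero_of_rel {a : FreeAlgebra k (Fin 3)} (h : rel k p a 0) :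
    RingQuot.mkAlgHom k (rel k p) a = 0 := by
  simpa using RingQuot.mkAlgHom_rel k h

theorem yH_pow : yH k p ^ p = 0 := by
  have h := mkAlgHom_eq_zero_of_rel k p (a := Y k ^ p) ⟨Or.inr (Or.inl rfl), rfl⟩
  rw [map_pow] at h
  exact h

theorem commute_gH_xH : Commute (gH k p) (xH k p) := by
  have h := mkAlgHom_eq_zero_of_rel k p (a := G k * X k - X k * G k)
    ⟨Or.inr (Or.inr (Or.inr (Or.inl rfl))), rfl⟩
  rw [map_sub, map_mul, map_mul, sub_eq_zero] at h
  exact h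

theorem gH_mul_yH : gH k p * yH k p = yH k p * gH k p + xH k p * gH k p := by
  have h := mkAlgHom_eq_zero_of_rel k p (a := G k * Y k - Y k * G k - X k * G k)
    ⟨Or.inr (Or.inr (Or.inr (Or.inr (Or.inl rfl)))), rfl⟩
  rw [map_sub, map_sub, map_mul, map_mul, map_mul, sub_sub, sub_eq_zero] at h
  exact h

theorem yH_mul_xH : yH k p * xH k p = xH k p * yH k p - (2⁻¹ : k) • xH k p ^ 2 := by
  have h := mkAlgHom_eq_zero_of_rel k p (a := Y k * X k - X k * Y k + (2⁻¹ : k) • X k ^ 2)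
    ⟨Or.inr (Or.inr (Or.inr (Or.inr (Or.inr rfl)))), rfl⟩
  simp only [map_sub, map_mul, map_smul, map_pow, sub_add, sub_eq_zero] at h
  exact h

theorem natCast_eq_zero [CharP k p] : (p : H k p) = 0 := by
  rw [← map_natCast (algebraMap k (H k p)), CharP.cast_eq_zero, map_zero]

theorem yH_mul_gH_pow_pred [CharP k p] (hp : p.Prime) :
    yH k p * gH k p ^ (p - 1) = gH k p ^ (p - 1) * (yH k p + xH k p) := by
  have hyg : yH k p * gH k p = gH k p * (yH k p + -xH k p) := by
    rw [mul_add, mul_neg, (commute_gH_xH k p).eq, gH_mul_yH, add_neg_cancel_right]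
  have hpx : (p - 1) • -xH k p = xH k p := by
    rw [smul_neg, neg_eq_iff_add_eq_zero, ← succ_nsmul, Nat.sub_add_cancel hp.one_le,
      nsmul_eq_mul, natCast_eq_zero, zero_mul]
  rw [mul_pow_eq_pow_mul_add_nsmul (commute_gH_xH k p).neg_right hyg, hpx]

theorem gH_pow_pred_mul_yH_pow [CharP k p] (hp : p.Prime) (hodd : Odd p) :
    (gH k p ^ (p - 1) * yH k p) ^ p = 0 := by
  have h2 : (2 : k) ≠ 0 := by
    rw [← Nat.cast_two, Ne, CharP.cast_eq_zero_iff k p, Nat.prime_dvd_prime_iff_eq hp Nat.prime_two]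
    rintro rfl
    exact Nat.not_odd_iff_even.mpr even_two hodd
  set t := (2⁻¹ : k) • xH k p with ht
  have hx : xH k p = 2 • t := by
    rw [two_nsmul, ← add_smul, ← two_mul, mul_inv_cancel₀ h2, one_smul]
  have hyt : yH k p * t = t * yH k p - t ^ 2 := by
    rw [ht, mul_smul_comm, yH_mul_xH, smul_sub, smul_mul_assoc, smul_pow, smul_smul, sq (2⁻¹ : k)]
  rw [mul_pow_eq_pow_mul_descendingProd ((commute_gH_xH k p).pow_left _)
      (yH_mul_gH_pow_pred k p hp), hx, descendingProd_eq_pow_of_prime hyt hp (natCast_eq_zero k p),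
    yH_pow, mul_zero]

end JordanBos

namespace Ldiv

variable {k : Type*} [Field k] {p : ℕ} {B : Type*} [Semiring B] [Algebra k B]

theorem algHom_ext {f g : Ldiv k p →ₐ[k] B} (h : f (zeta k p) = g (zeta k p)) : f = g :=
  Ideal.Quotient.algHom_ext k (Polynomial.algHom_ext h)

def lift (b : B) (hb : b ^ p = 0) : Ldiv k p →ₐ[k] B :=
  Ideal.Quotient.liftₐ _ (Polynomial.aeval b) fun a ha => by
    obtain ⟨c, rfl⟩ := Ideal.mem_span_singleton.mp ha
    rw [map_mul, map_pow, Polynomial.aeval_X, hb, zero_mul]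

@[simp]
theorem lift_zeta (b : B) (hb : b ^ p = 0) : lift b hb (zeta k p) = b :=
  Polynomial.aeval_X b

end Ldiv

/-- Let `k` be a field of odd prime characteristic `p`, `H`
the bosonization of the restricted Jordan plane and `L = k[ζ]/(ζ^p)`.  There
is a unique algebra map `s : L → H` with `s(ζ̄) = g^{p−1}y`; equivalently
`(g^{p−1}y)^p = 0` in `H`.  Moreover `π ∘ s = id_L`, where `π : H → L` is the
algebra map with `π(x) = 0`, `π(g) = 1`, `π(y) = ζ̄`. -/
theorem jordan_bosonization_section
    (k : Type*) [Field k] (p : ℕ) (hp : p.Prime) (hodd : Odd p)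
    [CharP k p] :
    ((gH k p ^ (p - 1) * yH k p) ^ p = 0) ∧
    (∃! s : Ldiv k p →ₐ[k] H k p,
      s (zeta k p) = gH k p ^ (p - 1) * yH k p) ∧
    (∀ π : H k p →ₐ[k] Ldiv k p,
      (π (xH k p) = 0 ∧ π (gH k p) = 1 ∧ π (yH k p) = zeta k p) →
      ∀ s : Ldiv k p →ₐ[k] H k p,
        s (zeta k p) = gH k p ^ (p - 1) * yH k p →
          π.comp s = AlgHom.id k (Ldiv k p)) := by
  have hz := gH_pow_pred_mul_yH_pow k p hp hodd
  refine ⟨hz, ⟨Ldiv.lift _ hz, Ldiv.lift_zeta _ hz, fun s hs => ?_⟩, ?_⟩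
  · exact Ldiv.algHom_ext (hs.trans (Ldiv.lift_zeta _ hz).symm)
  · rintro π ⟨-, hπg, hπy⟩ s hs
    refine Ldiv.algHom_ext ?_
    simp [hs, hπg, hπy]
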